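/- Let C be a pure normal simplicial complex of dimension d−1, let S be a nonempty set of vertices of C, and let F0 be an ordered facet of C whose ordering is admissible with respect to S. Then there exists a monotone conservative path towards S that starts at F0 and ends in a facet that intersects S. -/

import Mathlib

/-! Common definitions: pure simplicial complexes (represented by their facet sets),
vertex-distance, links, ordered facets, vectors of distances, admissibility, and
monotone/conservative dual paths, following Adiprasito–Benedetti's combinatorial
segments. -/

open scoped Classical

noncomputable section

namespace MCP

variable {V : Type} [DecidableEq V] [Fintype V]

/-- The vertex set of the complex whose set of facets is `C`. -/
def verts (C : Finset (Finset V)) : Finset V := C.sup id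

/-- `f` is a face of the pure complex with facet set `C`. -/
def IsFace (C : Finset (Finset V)) (f : Finset V) : Prop := ∃ F ∈ C, f ⊆ F

/-- `C` is pure of dimension `d - 1`: every facet has `d` vertices. -/
def Pure (C : Finset (Finset V)) (d : ℕ) : Prop := ∀ F ∈ C, F.card = d

/-- The 1-skeleton of the complex: two vertices are joined iff they lie in a common facet. -/
def skeleton (C : Finset (Finset V)) : SimpleGraph V where
  Adj u v := u ≠ v ∧ ∃ F ∈ C, u ∈ F ∧ v ∈ F
  symm := ⟨by
    rintro u v ⟨h, F, hF, hu, hv⟩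
    exact ⟨h.symm, F, hF, hv, hu⟩⟩
  loopless := ⟨by rintro u ⟨h, -⟩; exact h rfl⟩

/-- Two facets are adjacent in the dual graph iff they differ in a single vertex. -/
def AdjFacets (F G : Finset V) : Prop :=
  F ≠ G ∧ F.card = G.card ∧ (F ∩ G).card + 1 = F.card

/-- A dual path: a list of facets of `C` in which consecutive facets are adjacent. -/
def IsDualPath (C : Finset (Finset V)) (P : List (Finset V)) : Prop :=
  (∀ F ∈ P, F ∈ C) ∧ P.Chain' AdjFacets

/-- `C` is normal: for every face `f`, any two facets containing `f` are joined by a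
dual path all of whose facets contain `f`. -/
def Normal (C : Finset (Finset V)) : Prop :=
  ∀ f : Finset V, ∀ F ∈ C, ∀ G ∈ C, f ⊆ F → f ⊆ G →
    ∃ P : List (Finset V), P.head? = some F ∧ P.getLast? = some G ∧
      (∀ H ∈ P, H ∈ C ∧ f ⊆ H) ∧ P.Chain' AdjFacets

/-- The (facet set of the) link of a vertex `x` in `C`. -/
def link (C : Finset (Finset V)) (x : V) : Finset (Finset V) :=
  (C.filter (fun F => x ∈ F)).image (fun F => F.erase x)

/-- Vertex-distance (in the 1-skeleton) between two sets of vertices, with value `⊤`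
if one of the sets is empty, and with the special `0/1` convention when the complex
is `0`-dimensional. -/
def vdistSets (C : Finset (Finset V)) (S T : Finset V) : ℕ∞ :=
  if C.sup Finset.card ≤ 1 then
    (if S.Nonempty ∧ T.Nonempty then (if (S ∩ T).Nonempty then 0 else 1) else ⊤)
  else ⨅ u ∈ S, ⨅ v ∈ T, (skeleton C).edist u v

/-- The derived target set `S'` in the link of `x`, used in the recursive definitions
of the vector of distances and of admissibility. -/
def targetSet (C : Finset (Finset V)) (x : V) (S : Finset V) : Finset V :=
  if x ∈ S then S ∩ verts (link C x)
  else (verts (link C x)).filter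
    (fun w => vdistSets C {w} S + 1 = vdistSets C {x} S)

/-- The vector of distances from an ordered facet (a list of vertices) to a target set. -/
def distVector : Finset (Finset V) → List V → Finset V → List ℕ∞
  | _, [], _ => []
  | C, x :: rest, S => vdistSets C {x} S :: distVector (link C x) rest (targetSet C x S)

/-- Admissibility of an ordering of a facet with respect to a target set: the first
vertex realizes the vertex-distance from the facet to the target set, and recursively
in the link. -/
def Admissible : Finset (Finset V) → List V → Finset V → Prop
  | _, [], _ => True
  | C, x :: rest, S =>
      vdistSets C {x} S = vdistSets C (x :: rest).toFinset S ∧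
      Admissible (link C x) rest (targetSet C x S)

/-- An ordered facet of `C`: a repetition-free list of vertices forming a facet. -/
def IsOrderedFacet (C : Finset (Finset V)) (L : List V) : Prop :=
  L.Nodup ∧ L.toFinset ∈ C

/-- A dual path of ordered facets. -/
def IsOrderedDualPath (C : Finset (Finset V)) (Γ : List (List V)) : Prop :=
  (∀ L ∈ Γ, IsOrderedFacet C L) ∧
  Γ.Chain' (fun L M => AdjFacets L.toFinset M.toFinset)

/-- A path of ordered facets is monotone towards `S` if its vectors of distances are
strictly lexicographically decreasing. -/
def MonotonePath (C : Finset (Finset V)) (S : Finset V) (Γ : List (List V)) : Prop :=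
  Γ.Chain' (fun L M => List.Lex (· < ·) (distVector C M S) (distVector C L S))

/-- The index of a step: the least position at which the two orderings differ. -/
def stepIndex (L M : List V) : ℕ := sInf {k : ℕ | L[k]? ≠ M[k]?}

/-- The step from `L` to `M` is conservative towards `S`: the removed vertex is the last
vertex of `L`, and `M` is admissibly ordered with maximum index among all admissible
reorderings. -/
def ConservativeStep (C : Finset (Finset V)) (S : Finset V) (L M : List V) : Prop :=
  (∃ x, L.getLast? = some x ∧ L.toFinset \ M.toFinset = {x}) ∧
  Admissible C M S ∧
  ∀ M' : List V, M'.Perm M → Admissible C M' S → stepIndex L M' ≤ stepIndex L M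

/-- A path of ordered facets is conservative towards `S` if its first facet is
admissibly ordered and every step is conservative. -/
def ConservativePath (C : Finset (Finset V)) (S : Finset V) (Γ : List (List V)) : Prop :=
  (∀ L ∈ Γ.head?, Admissible C L S) ∧ Γ.Chain' (ConservativeStep C S)

/-- A monotone conservative dual path of ordered facets towards `S`. -/
def MonoConsPath (C : Finset (Finset V)) (S : Finset V) (Γ : List (List V)) : Prop :=
  IsOrderedDualPath C Γ ∧ MonotonePath C S Γ ∧ ConservativePath C S Γ

/-- The path `Γ` starts at the facet `F`. -/
def StartsAt (Γ : List (List V)) (F : Finset V) : Prop :=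
  ∃ L, Γ.head? = some L ∧ L.toFinset = F

/-- The path `Γ` ends at the facet `F`. -/
def EndsAt (Γ : List (List V)) (F : Finset V) : Prop :=
  ∃ L, Γ.getLast? = some L ∧ L.toFinset = F

/-- `C` is flag: every set of vertices of `C` pairwise joined by edges of `C` is a face. -/
def Flag (C : Finset (Finset V)) : Prop :=
  ∀ T : Finset V, T ⊆ verts C →
    (∀ u ∈ T, ∀ v ∈ T, u ≠ v → (skeleton C).Adj u v) → IsFace C T

/-- A critical clique: a clique of the 1-skeleton that becomes a face after removing a
suitable vertex. -/
def CriticalClique (C : Finset (Finset V)) (T : Finset V) : Prop :=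
  (∀ u ∈ T, ∀ v ∈ T, u ≠ v → (skeleton C).Adj u v) ∧ ∃ v ∈ T, IsFace C (T.erase v)

/-- `C` is `k`-banner: every critical clique with at least `k + 1` vertices is a face. -/
def Banner (C : Finset (Finset V)) (k : ℕ) : Prop :=
  ∀ T : Finset V, CriticalClique C T → k + 1 ≤ T.card → IsFace C T

/-- A pure `(d-1)`-complex is a pseudomanifold (possibly with boundary) if every
`(d-2)`-dimensional face lies in at most two facets. -/
def Pseudomanifold (C : Finset (Finset V)) (d : ℕ) : Prop :=
  ∀ f : Finset V, f.card + 1 = d → IsFace C f → (C.filter (fun F => f ⊆ F)).card ≤ 2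

/-- A pure `(d-1)`-complex is a pseudomanifold without boundary if every
`(d-2)`-dimensional face lies in exactly two facets. -/
def PseudomanifoldNoBoundary (C : Finset (Finset V)) (d : ℕ) : Prop :=
  ∀ f : Finset V, f.card + 1 = d → IsFace C f → (C.filter (fun F => f ⊆ F)).card = 2

/-- The join of two complexes (given by their facet sets, on disjoint vertex sets). -/
def join (C₁ C₂ : Finset (Finset V)) : Finset (Finset V) :=
  (C₁ ×ˢ C₂).image (fun p => p.1 ∪ p.2)

/-- The one-point-suspension of `C` at the vertex `v`; the two new suspension vertices
are `Sum.inr false` and `Sum.inr true`. -/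
def ops (C : Finset (Finset V)) (v : V) : Finset (Finset (V ⊕ Bool)) :=
  ((C.filter (fun F => v ∈ F)).image
      (fun F => ((F.erase v).image Sum.inl) ∪ {Sum.inr false, Sum.inr true}))
  ∪ ((C.filter (fun F => v ∉ F)).image (fun F => (F.image Sum.inl) ∪ {Sum.inr false}))
  ∪ ((C.filter (fun F => v ∉ F)).image (fun F => (F.image Sum.inl) ∪ {Sum.inr true}))

/-- The degree of a vertex in the 1-skeleton of `C`. -/
def degree (C : Finset (Finset V)) (x : V) : ℕ :=
  (Finset.univ.filter fun w => (skeleton C).Adj x w).card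

/-- Vertex-decomposability of a pure complex given by its facet set: either a single
simplex, or there is a vertex whose deletion stays pure of the same dimension and whose
link and deletion are both vertex-decomposable.  (The condition
`∀ F ∈ C, ∃ G ∈ C, x ∉ G ∧ F.erase x ⊆ G` expresses that the deletion of `x` is pure
of the same dimension, so that its facets are the facets of `C` avoiding `x`.) -/
inductive VertexDecomposable : Finset (Finset V) → Prop
  | simplex (F : Finset V) : VertexDecomposable {F}
  | step (C : Finset (Finset V)) (x : V) (hx : x ∈ verts C)
      (hdelpure : ∀ F ∈ C, ∃ G ∈ C, x ∉ G ∧ F.erase x ⊆ G)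
      (hlink : VertexDecomposable (link C x))
      (hdel : VertexDecomposable (C.filter (fun F => x ∉ F))) :
      VertexDecomposable C

/-- The maximum length (number of steps) of a monotone conservative path in `C`, over
all nonempty target sets of vertices of `C`. -/
def maxl (C : Finset (Finset V)) : ℕ :=
  sSup {n : ℕ | ∃ (S : Finset V) (Γ : List (List V)), S.Nonempty ∧ S ⊆ verts C ∧
    MonoConsPath C S Γ ∧ Γ.length = n + 1}

/-- `CombSeg C Γ S x₀`: the dual path `Γ` is a combinatorial segment in `C` from its
first facet to the target set `S`, anchored at `x₀` (Adiprasito–Benedetti). -/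
inductive CombSeg : Finset (Finset V) → List (Finset V) → Finset V → V → Prop
  | intersects (C : Finset (Finset V)) (F S : Finset V) (x₀ : V)
      (hF : F ∈ C) (hx : x₀ ∈ F) (hFS : (F ∩ S).Nonempty) :
      CombSeg C [F] S x₀
  | dimOne (C : Finset (Finset V)) (S : Finset V) (x₀ v : V)
      (hdim : ∀ F ∈ C, F.card = 1)
      (h₁ : {x₀} ∈ C) (h₂ : {v} ∈ C) (hx : x₀ ∉ S) (hv : v ∈ S) :
      CombSeg C [{x₀}, {v}] S x₀
  | step (C : Finset (Finset V)) (F₀ : Finset V) (Γ₁ Γ₂ : List (Finset V))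
      (Fk S : Finset V) (x₀ y x₀' : V) (ℓ : ℕ∞)
      (hdim : ∀ F ∈ C, 2 ≤ F.card)
      (hmem : ∀ F ∈ F₀ :: Γ₁, F ∈ C)
      (hdisj : ∀ F ∈ F₀ :: Γ₁, F ∩ S = ∅)
      (hℓ : vdistSets C F₀ S = ℓ)
      (hbefore : ∀ F ∈ F₀ :: Γ₁, ¬ vdistSets C F S < ℓ)
      (hafter : vdistSets C Fk S < ℓ)
      (hy : y ∈ Fk)
      (hyd : vdistSets C {y} S + 1 = ℓ)
      (hyuniq : ∀ z ∈ Fk, vdistSets C {z} S + 1 = ℓ → z = y)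
      (hx₀ : ∀ F ∈ F₀ :: Γ₁, x₀ ∈ F) (hx₀k : x₀ ∈ Fk)
      (hlink : CombSeg (link C x₀)
          (((F₀ :: Γ₁) ++ [Fk]).map (fun F => F.erase x₀))
          ((verts (link C x₀)).filter (fun w => vdistSets C {w} S + 1 = ℓ)) x₀')
      (htail : CombSeg C (Fk :: Γ₂) S y) :
      CombSeg C (F₀ :: Γ₁ ++ Fk :: Γ₂) S x₀

end MCP

/-! Induction on the dimension and, in a fixed dimension, on the vertex-distance from the
current facet `v :: rest` to `S`, which is the distance `λ` of `v` to `S` by admissibility.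
In the link of `v`, whose target set consists of the neighbours of `v` at distance `λ - 1`,
the induction hypothesis gives a path from `rest` to that target set. Putting `v` in front of
each of its facets but the last keeps the first distance equal to `λ`, so the vectors of
distances still decrease; the last facet joined with `v` is at distance less than `λ`, and
after reordering it admissibly with maximal index one recurses from there. Normality makes all
distances finite and is inherited by links. -/

theorem List.isChain_and {α : Type*} {R R' : α → α → Prop} {l : List α} :
    l.IsChain (fun a b => R a b ∧ R' a b) ↔ l.IsChain R ∧ l.IsChain R' := by
  simp only [List.isChain_iff_forall_rel_of_append_cons_cons, imp_and, forall_and]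

namespace MCP

variable {V : Type} {C : Finset (Finset V)}

lemma reachable_of_mem_facet {F : Finset V} {u v : V} (hF : F ∈ C) (hu : u ∈ F) (hv : v ∈ F) :
    (skeleton C).Reachable u v := by
  rcases eq_or_ne u v with rfl | hne
  · rfl
  · exact SimpleGraph.Adj.reachable ⟨hne, F, hF, hu, hv⟩

lemma stepIndex_cons_cons {x : V} {L M : List V} (h : L ≠ M) :
    stepIndex (x :: L) (x :: M) = stepIndex L M + 1 := by
  have hpos : 1 ≤ sInf {k : ℕ | (x :: L)[k]? ≠ (x :: M)[k]?} := by
    refine Nat.one_le_iff_ne_zero.mpr fun h0 => ?_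
    rcases Nat.sInf_eq_zero.mp h0 with h0 | h0
    · simp at h0
    · obtain ⟨k, hk⟩ : ∃ k : ℕ, L[k]? ≠ M[k]? := by
        by_contra! hk
        exact h (List.ext_getElem? hk)
      exact Set.eq_empty_iff_forall_notMem.mp h0 (k + 1) (by simpa using hk)
  unfold stepIndex
  rw [← Nat.sInf_add hpos]
  simp

lemma stepIndex_cons_cons_of_ne {x y : V} (h : x ≠ y) (L M : List V) :
    stepIndex (x :: L) (y :: M) = 0 :=
  Nat.sInf_eq_zero.mpr (Or.inl (by simp [h]))

variable [DecidableEq V]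

section Link

lemma mem_verts {v : V} : v ∈ verts C ↔ ∃ F ∈ C, v ∈ F := by
  simp [verts]

lemma mem_link {x : V} {G : Finset V} : G ∈ link C x ↔ ∃ F ∈ C, x ∈ F ∧ F.erase x = G := by
  simp [link, and_assoc]

lemma notMem_of_mem_link {x : V} {G : Finset V} (h : G ∈ link C x) : x ∉ G := by
  obtain ⟨F, -, -, rfl⟩ := mem_link.mp h
  exact Finset.notMem_erase x F

lemma insert_mem_of_mem_link {x : V} {G : Finset V} (h : G ∈ link C x) : insert x G ∈ C := by
  obtain ⟨F, hF, hx, rfl⟩ := mem_link.mp h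
  rwa [Finset.insert_erase hx]

lemma erase_mem_link {x : V} {F : Finset V} (hF : F ∈ C) (hx : x ∈ F) : F.erase x ∈ link C x :=
  mem_link.mpr ⟨F, hF, hx, rfl⟩

lemma mem_verts_link {x w : V} : w ∈ verts (link C x) ↔ (skeleton C).Adj x w := by
  constructor
  · intro h
    obtain ⟨G, hG, hwG⟩ := mem_verts.mp h
    exact ⟨fun e => notMem_of_mem_link hG (e ▸ hwG), insert x G, insert_mem_of_mem_link hG,
      Finset.mem_insert_self _ _, Finset.mem_insert_of_mem hwG⟩
  · rintro ⟨hne, F, hF, hxF, hwF⟩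
    exact mem_verts.mpr ⟨F.erase x, erase_mem_link hF hxF, Finset.mem_erase.mpr ⟨hne.symm, hwF⟩⟩

lemma Pure.link {d : ℕ} (hpure : Pure C d) (x : V) : Pure (link C x) (d - 1) := by
  intro G hG
  obtain ⟨F, hF, hx, rfl⟩ := mem_link.mp hG
  rw [Finset.card_erase_of_mem hx, hpure F hF]

lemma AdjFacets.erase {x : V} {F G : Finset V} (h : AdjFacets F G) (hxF : x ∈ F) (hxG : x ∈ G) :
    AdjFacets (F.erase x) (G.erase x) := by
  obtain ⟨hne, hcard, hint⟩ := h
  have hx : x ∈ F ∩ G := Finset.mem_inter.mpr ⟨hxF, hxG⟩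
  refine ⟨fun he => hne ?_, ?_, ?_⟩
  · rw [← Finset.insert_erase hxF, ← Finset.insert_erase hxG, he]
  · rw [Finset.card_erase_of_mem hxF, Finset.card_erase_of_mem hxG, hcard]
  · rw [Finset.erase_inter, Finset.inter_erase, Finset.erase_idem, Finset.card_erase_of_mem hx,
      Finset.card_erase_of_mem hxF]
    have := Finset.card_pos.mpr ⟨x, hx⟩
    omega

lemma AdjFacets.insert {x : V} {F G : Finset V} (h : AdjFacets F G) (hxF : x ∉ F) (hxG : x ∉ G) :
    AdjFacets (insert x F) (insert x G) := by
  obtain ⟨hne, hcard, hint⟩ := h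
  refine ⟨fun he => hne ?_, ?_, ?_⟩
  · rw [← Finset.erase_insert hxF, he, Finset.erase_insert hxG]
  · rw [Finset.card_insert_of_notMem hxF, Finset.card_insert_of_notMem hxG, hcard]
  · rw [← Finset.insert_inter_distrib, Finset.card_insert_of_notMem (by simp [hxF]),
      Finset.card_insert_of_notMem hxF, hint]

lemma Normal.link (hnormal : Normal C) (x : V) : Normal (link C x) := by
  intro f F hF G hG hfF hfG
  obtain ⟨F', hF', hxF', rfl⟩ := mem_link.mp hF
  obtain ⟨G', hG', hxG', rfl⟩ := mem_link.mp hG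
  have hxf : x ∉ f := fun hx => Finset.notMem_erase x F' (hfF hx)
  obtain ⟨P, hhead, hlast, hmem, hchain⟩ := hnormal (insert x f) F' hF' G' hG'
    (Finset.insert_subset hxF' (hfF.trans (Finset.erase_subset _ _)))
    (Finset.insert_subset hxG' (hfG.trans (Finset.erase_subset _ _)))
  have hxP : ∀ H ∈ P, x ∈ H := fun H hH => (hmem H hH).2 (Finset.mem_insert_self x f)
  refine ⟨P.map (Finset.erase · x), by simp [hhead], by simp [hlast], ?_, ?_⟩
  · simp only [List.mem_map]
    rintro _ ⟨H, hH, rfl⟩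
    exact ⟨erase_mem_link (hmem H hH).1 (hxP H hH),
      Finset.subset_erase.mpr ⟨(Finset.subset_insert x f).trans (hmem H hH).2, hxf⟩⟩
  · exact (List.isChain_map _).mpr (List.IsChain.imp_of_mem_imp
      (fun H H' hH hH' hadj => hadj.erase (hxP H hH) (hxP H' hH')) hchain)

end Link

section Distance

variable {A B S : Finset V} {u v w x : V}

/-- Adjacent facets of size at least two share a vertex, so the 1-skeleton is connected
along any dual path. -/
lemma Normal.reachable (hnormal : Normal C) (hcard : ∀ F ∈ C, 2 ≤ F.card)
    (hu : u ∈ verts C) (hv : v ∈ verts C) : (skeleton C).Reachable u v := by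
  obtain ⟨F, hF, huF⟩ := mem_verts.mp hu
  obtain ⟨G, hG, hvG⟩ := mem_verts.mp hv
  obtain ⟨P, hhead, hlast, hmem, hchain⟩ :=
    hnormal ∅ F hF G hG (Finset.empty_subset _) (Finset.empty_subset _)
  have hchain' : P.IsChain (fun H H' => H ∈ C ∧ H' ∈ C ∧ AdjFacets H H') :=
    List.IsChain.imp_of_mem_imp (fun H H' hH hH' h => ⟨(hmem H hH).1, (hmem H' hH').1, h⟩) hchain
  refine hchain'.induction (fun H => ∀ w ∈ H, (skeleton C).Reachable u w) P ?_ ?_ G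
    (List.mem_of_getLast? hlast) v hvG
  · rintro H H' ⟨hH, hH', hadj⟩ ih w hw
    obtain ⟨c, hc⟩ : (H ∩ H').Nonempty := by
      rw [← Finset.card_pos]
      have := hadj.2.2
      have := hcard H hH
      omega
    rw [Finset.mem_inter] at hc
    exact (ih c hc.1).trans (reachable_of_mem_facet hH' hc.2 hw)
  · intro hP w hw
    rw [List.head?_eq_some_head hP, Option.some_inj] at hhead
    exact reachable_of_mem_facet hF huF (hhead ▸ hw)

lemma vdistSets_eq_inf (hC : 1 < C.sup Finset.card) (A B : Finset V) :
    vdistSets C A B = A.inf fun u => B.inf fun v => (skeleton C).edist u v := by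
  rw [vdistSets, if_neg hC.not_ge, Finset.inf_eq_iInf]
  exact iInf_congr fun u => iInf_congr fun _ => (Finset.inf_eq_iInf _ _).symm

lemma vdistSets_singleton (hC : 1 < C.sup Finset.card) (x : V) (B : Finset V) :
    vdistSets C {x} B = B.inf fun v => (skeleton C).edist x v := by
  rw [vdistSets_eq_inf hC, Finset.inf_singleton]

lemma vdistSets_le_of_mem (hC : 1 < C.sup Finset.card) (hx : x ∈ A) :
    vdistSets C A B ≤ vdistSets C {x} B := by
  rw [vdistSets_eq_inf hC, vdistSets_singleton hC]
  exact Finset.inf_le hx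

lemma le_vdistSets (hC : 1 < C.sup Finset.card) {c : ℕ∞} (H : ∀ x ∈ A, c ≤ vdistSets C {x} B) :
    c ≤ vdistSets C A B := by
  rw [vdistSets_eq_inf hC]
  exact Finset.le_inf fun x hx => vdistSets_singleton hC x B ▸ H x hx

lemma vdistSets_singleton_le_edist (hC : 1 < C.sup Finset.card) (hs : w ∈ B) :
    vdistSets C {x} B ≤ (skeleton C).edist x w := by
  rw [vdistSets_singleton hC]
  exact Finset.inf_le hs

lemma exists_vdistSets_singleton_eq_edist (hC : 1 < C.sup Finset.card) (x : V)
    (hB : B.Nonempty) : ∃ s ∈ B, vdistSets C {x} B = (skeleton C).edist x s := by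
  obtain ⟨s, hs, hmin⟩ := Finset.exists_mem_eq_inf B hB ((skeleton C).edist x)
  exact ⟨s, hs, by rw [vdistSets_singleton hC, hmin]⟩

lemma vdistSets_singleton_eq_zero_iff (hC : 1 < C.sup Finset.card) :
    vdistSets C {x} B = 0 ↔ x ∈ B := by
  rw [vdistSets_singleton hC, ← bot_eq_zero, Finset.inf_eq_bot_iff]
  simp [SimpleGraph.edist_eq_zero_iff]

lemma vdistSets_le_add_one_of_adj (hC : 1 < C.sup Finset.card) (hadj : (skeleton C).Adj u w) :
    vdistSets C {u} B ≤ vdistSets C {w} B + 1 := by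
  rcases B.eq_empty_or_nonempty with rfl | hB
  · simp [vdistSets_singleton hC]
  obtain ⟨s, hs, hws⟩ := exists_vdistSets_singleton_eq_edist hC w hB
  calc vdistSets C {u} B ≤ (skeleton C).edist u s := vdistSets_singleton_le_edist hC hs
    _ ≤ (skeleton C).edist u w + (skeleton C).edist w s := SimpleGraph.edist_triangle
    _ = vdistSets C {w} B + 1 := by
      rw [SimpleGraph.edist_eq_one_iff_adj.mpr hadj, hws, add_comm]

/-- The first step of a shortest walk from `v` to `S`. -/
lemma exists_adj_vdistSets_add_one (hC : 1 < C.sup Finset.card) (hv : v ∉ S)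
    (hfin : vdistSets C {v} S ≠ ⊤) :
    ∃ w, (skeleton C).Adj v w ∧ vdistSets C {w} S + 1 = vdistSets C {v} S := by
  obtain ⟨s, hs, hvs⟩ := exists_vdistSets_singleton_eq_edist hC v
    (S.nonempty_iff_ne_empty.mpr (by rintro rfl; simp [vdistSets_singleton hC] at hfin))
  obtain ⟨p, hp⟩ := SimpleGraph.exists_walk_of_edist_ne_top (hvs ▸ hfin)
  cases p with
  | nil => exact absurd hs hv
  | @cons _ w _ hadj q =>
    refine ⟨w, hadj, le_antisymm ?_ (vdistSets_le_add_one_of_adj hC hadj)⟩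
    have hw : vdistSets C {w} S ≤ q.length :=
      (vdistSets_singleton_le_edist hC hs).trans (SimpleGraph.edist_le q)
    rw [hvs, ← hp, SimpleGraph.Walk.length_cons, Nat.cast_succ]
    exact add_le_add_left hw 1

lemma exists_vdistSets_singleton_eq {F : Finset V} (hF : F ∈ C) (hne : F.Nonempty)
    (B : Finset V) : ∃ x ∈ F, vdistSets C {x} B = vdistSets C F B := by
  by_cases hC : 1 < C.sup Finset.card
  · obtain ⟨x, hx, hmin⟩ := Finset.exists_mem_eq_inf F hne
      fun u => B.inf fun v => (skeleton C).edist u v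
    exact ⟨x, hx, by simp only [vdistSets_eq_inf hC, Finset.inf_singleton, hmin]⟩
  · rcases hne.exists_eq_singleton_or_nontrivial with ⟨x, rfl⟩ | hnt
    · exact ⟨x, Finset.mem_singleton_self x, rfl⟩
    · exact absurd ((Finset.one_lt_card_iff_nontrivial.mpr hnt).trans_le (Finset.le_sup hF)) hC

lemma vdistSets_singleton_ne_top (hC : 1 < C.sup Finset.card) (hnormal : Normal C)
    (hcard : ∀ F ∈ C, 2 ≤ F.card) (hv : v ∈ verts C) (hS : S.Nonempty) (hSv : S ⊆ verts C) :
    vdistSets C {v} S ≠ ⊤ := by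
  obtain ⟨s, hs⟩ := hS
  exact ne_top_of_le_ne_top
    (SimpleGraph.edist_ne_top_iff_reachable.mpr (hnormal.reachable hcard hv (hSv hs)))
    (vdistSets_singleton_le_edist hC hs)

end Distance

section TargetSet

variable {G S : Finset V} {u v w : V}

lemma targetSet_subset (v : V) (S : Finset V) : targetSet C v S ⊆ verts (link C v) := by
  unfold targetSet
  split_ifs
  exacts [Finset.inter_subset_right, Finset.filter_subset _ _]

lemma mem_targetSet_of_notMem (hv : v ∉ S) :
    w ∈ targetSet C v S ↔ w ∈ verts (link C v) ∧ vdistSets C {w} S + 1 = vdistSets C {v} S := by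
  rw [targetSet, if_neg hv, Finset.mem_filter]

lemma targetSet_nonempty (hC : 1 < C.sup Finset.card) (hv : v ∉ S)
    (hfin : vdistSets C {v} S ≠ ⊤) : (targetSet C v S).Nonempty := by
  obtain ⟨w, hadj, hw⟩ := exists_adj_vdistSets_add_one hC hv hfin
  exact ⟨w, (mem_targetSet_of_notMem hv).mpr ⟨mem_verts_link.mpr hadj, hw⟩⟩

lemma vdistSets_lt_of_mem_targetSet (hv : v ∉ S) (hfin : vdistSets C {v} S ≠ ⊤)
    (hw : w ∈ targetSet C v S) : vdistSets C {w} S < vdistSets C {v} S := by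
  obtain ⟨-, hw⟩ := (mem_targetSet_of_notMem hv).mp hw
  rw [← hw] at hfin ⊢
  exact (ENat.lt_add_one_iff (WithTop.add_ne_top.mp hfin).1).mpr le_rfl

lemma vdistSets_le_of_notMem_targetSet (hC : 1 < C.sup Finset.card) (hv : v ∉ S)
    (hu : u ∈ verts (link C v)) (huT : u ∉ targetSet C v S) :
    vdistSets C {v} S ≤ vdistSets C {u} S := by
  rcases (vdistSets_le_add_one_of_adj hC (mem_verts_link.mp hu)).eq_or_lt with heq | hlt
  · exact absurd ((mem_targetSet_of_notMem hv).mpr ⟨hu, heq.symm⟩) huT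
  · exact Order.le_of_lt_add_one hlt

lemma vdistSets_insert_of_disjoint (hC : 1 < C.sup Finset.card) (hv : v ∉ S)
    (hG : G ∈ link C v) (hGT : Disjoint G (targetSet C v S)) :
    vdistSets C (insert v G) S = vdistSets C {v} S := by
  refine le_antisymm (vdistSets_le_of_mem hC (Finset.mem_insert_self v G)) (le_vdistSets hC ?_)
  intro u hu
  rcases Finset.mem_insert.mp hu with rfl | hu
  · exact le_rfl
  · exact vdistSets_le_of_notMem_targetSet hC hv (mem_verts.mpr ⟨G, hG, hu⟩)
      (Finset.disjoint_left.mp hGT hu)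

lemma disjoint_insert_of_disjoint_targetSet (hC : 1 < C.sup Finset.card) (hv : v ∉ S)
    (hG : G ∈ link C v) (hGT : Disjoint G (targetSet C v S)) : Disjoint (insert v G) S := by
  refine Finset.disjoint_insert_left.mpr ⟨hv, Finset.disjoint_left.mpr fun u hu huS => hv ?_⟩
  have h := vdistSets_le_of_notMem_targetSet hC hv (mem_verts.mpr ⟨G, hG, hu⟩)
    (Finset.disjoint_left.mp hGT hu)
  rwa [(vdistSets_singleton_eq_zero_iff hC).mpr huS, nonpos_iff_eq_zero,
    vdistSets_singleton_eq_zero_iff hC] at h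

lemma vdistSets_insert_lt (hC : 1 < C.sup Finset.card) (hv : v ∉ S)
    (hfin : vdistSets C {v} S ≠ ⊤) (hGT : (G ∩ targetSet C v S).Nonempty) :
    vdistSets C (insert v G) S < vdistSets C {v} S := by
  obtain ⟨w, hw⟩ := hGT
  rw [Finset.mem_inter] at hw
  exact (vdistSets_le_of_mem hC (Finset.mem_insert_of_mem hw.1)).trans_lt
    (vdistSets_lt_of_mem_targetSet hv hfin hw.2)

end TargetSet

section Orderings

lemma IsOrderedFacet.of_cons {v : V} {L : List V} (h : IsOrderedFacet C (v :: L)) :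
    IsOrderedFacet (link C v) L := by
  obtain ⟨hnodup, hmem⟩ := h
  have hvL : v ∉ L.toFinset := by simpa using (List.nodup_cons.mp hnodup).1
  refine ⟨(List.nodup_cons.mp hnodup).2, ?_⟩
  rw [← Finset.erase_insert hvL, ← List.toFinset_cons]
  exact erase_mem_link hmem (List.mem_toFinset.mpr List.mem_cons_self)

lemma IsOrderedFacet.cons {v : V} {L : List V} (h : IsOrderedFacet (link C v) L) :
    IsOrderedFacet C (v :: L) :=
  ⟨List.nodup_cons.mpr ⟨fun hv => notMem_of_mem_link h.2 (List.mem_toFinset.mpr hv), h.1⟩,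
    by rw [List.toFinset_cons]; exact insert_mem_of_mem_link h.2⟩

lemma admissible_singleton (x : V) (T : Finset V) : Admissible C [x] T :=
  ⟨rfl, trivial⟩

theorem exists_admissible {F : Finset V} (hF : F ∈ C) (T : Finset V) :
    ∃ L : List V, L.Nodup ∧ L.toFinset = F ∧ Admissible C L T := by
  obtain ⟨n, hn⟩ : ∃ n, F.card = n := ⟨_, rfl⟩
  induction n generalizing C F T with
  | zero => exact ⟨[], List.nodup_nil, by simp [Finset.card_eq_zero.mp hn], trivial⟩
  | succ n ih =>
    obtain ⟨x, hxF, hx⟩ := exists_vdistSets_singleton_eq hF (Finset.card_pos.mp (by omega)) T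
    obtain ⟨L, hLn, hLF, hLa⟩ := ih (erase_mem_link hF hxF) (targetSet C x T)
      (by rw [Finset.card_erase_of_mem hxF, hn, Nat.add_sub_cancel])
    have hxL : insert x L.toFinset = F := by rw [hLF, Finset.insert_erase hxF]
    refine ⟨x :: L, List.nodup_cons.mpr ⟨?_, hLn⟩, by rw [List.toFinset_cons, hxL], ?_, hLa⟩
    · rw [← List.mem_toFinset, hLF]
      exact Finset.notMem_erase x F
    · rw [List.toFinset_cons, hxL, hx]

theorem exists_admissible_max_stepIndex {F : Finset V} (hF : F ∈ C) (T : Finset V)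
    (L : List V) : ∃ M : List V, M.Nodup ∧ M.toFinset = F ∧ Admissible C M T ∧
      ∀ M' : List V, M'.Perm M → Admissible C M' T → stepIndex L M' ≤ stepIndex L M := by
  obtain ⟨M₀, hM₀n, hM₀F, hM₀a⟩ := exists_admissible hF T
  set orderings := M₀.permutations.toFinset.filter (Admissible C · T)
  have hmem : ∀ {M}, M ∈ orderings ↔ M.Perm M₀ ∧ Admissible C M T := by
    simp [orderings, List.mem_permutations]
  obtain ⟨M, hM, hmax⟩ := orderings.exists_max_image (stepIndex L)
    ⟨M₀, hmem.mpr ⟨List.Perm.refl _, hM₀a⟩⟩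
  obtain ⟨hperm, hadm⟩ := hmem.mp hM
  exact ⟨M, hperm.nodup_iff.mpr hM₀n, by rw [List.toFinset_eq_of_perm _ _ hperm, hM₀F], hadm,
    fun M' hM' hadm' => hmax M' (hmem.mpr ⟨hM'.trans hperm, hadm'⟩)⟩

end Orderings

section Paths

variable {S : Finset V} {v : V}

def IsMonoConsStep (C : Finset (Finset V)) (S : Finset V) (L M : List V) : Prop :=
  AdjFacets L.toFinset M.toFinset ∧ List.Lex (· < ·) (distVector C M S) (distVector C L S) ∧
    ConservativeStep C S L M

lemma monoConsPath_iff {Γ : List (List V)} :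
    MonoConsPath C S Γ ↔ (∀ L ∈ Γ, IsOrderedFacet C L) ∧ (∀ L ∈ Γ.head?, Admissible C L S) ∧
      Γ.IsChain (IsMonoConsStep C S) := by
  delta IsMonoConsStep
  constructor
  · rintro ⟨⟨hfac, hadj⟩, hlex, hhead, hcons⟩
    exact ⟨hfac, hhead, List.isChain_and.mpr ⟨hadj, List.isChain_and.mpr ⟨hlex, hcons⟩⟩⟩
  · rintro ⟨hfac, hhead, hchain⟩
    obtain ⟨hadj, hrest⟩ := List.isChain_and.mp hchain
    obtain ⟨hlex, hcons⟩ := List.isChain_and.mp hrest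
    exact ⟨⟨hfac, hadj⟩, hlex, hhead, hcons⟩

lemma MonoConsPath.append {Γ₁ Γ₂ : List (List V)} (h₁ : MonoConsPath C S Γ₁)
    (h₂ : MonoConsPath C S Γ₂)
    (hstep : ∀ L ∈ Γ₁.getLast?, ∀ M ∈ Γ₂.head?, IsMonoConsStep C S L M) :
    MonoConsPath C S (Γ₁ ++ Γ₂) := by
  obtain ⟨hfac₁, hhead₁, hchain₁⟩ := monoConsPath_iff.mp h₁
  obtain ⟨hfac₂, hhead₂, hchain₂⟩ := monoConsPath_iff.mp h₂
  refine monoConsPath_iff.mpr ⟨?_, ?_, List.isChain_append.mpr ⟨hchain₁, hchain₂, hstep⟩⟩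
  · simpa only [List.mem_append, or_imp, forall_and] using ⟨hfac₁, hfac₂⟩
  · rcases Γ₁ with _ | ⟨L, Γ₁⟩
    · exact hhead₂
    · exact hhead₁

lemma MonoConsPath.of_append_left {Γ₁ Γ₂ : List (List V)} (h : MonoConsPath C S (Γ₁ ++ Γ₂)) :
    MonoConsPath C S Γ₁ := by
  obtain ⟨hfac, hhead, hchain⟩ := monoConsPath_iff.mp h
  refine monoConsPath_iff.mpr ⟨fun L hL => hfac L (List.mem_append_left _ hL), ?_,
    (List.isChain_append.mp hchain).1⟩
  rcases Γ₁ with _ | ⟨L, Γ₁⟩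
  · simp
  · exact hhead

lemma admissible_cons_of_disjoint (hC : 1 < C.sup Finset.card) (hv : v ∉ S) {L : List V}
    (hL : L.toFinset ∈ link C v) (hLT : Disjoint L.toFinset (targetSet C v S))
    (hadm : Admissible (link C v) L (targetSet C v S)) : Admissible C (v :: L) S :=
  ⟨by rw [List.toFinset_cons, vdistSets_insert_of_disjoint hC hv hL hLT], hadm⟩

lemma ConservativeStep.cons (hC : 1 < C.sup Finset.card) (hv : v ∉ S) {a b : List V}
    (ha : a.toFinset ∈ link C v) (hb : b.toFinset ∈ link C v)
    (hbT : Disjoint b.toFinset (targetSet C v S))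
    (hab : ConservativeStep (link C v) (targetSet C v S) a b) :
    ConservativeStep C S (v :: a) (v :: b) := by
  obtain ⟨⟨x, hxlast, hxdiff⟩, hbadm, hbmax⟩ := hab
  have hne : a.toFinset ≠ b.toFinset := by
    intro h
    simp [h] at hxdiff
  refine ⟨⟨x, by simp [List.getLast?_cons, hxlast], ?_⟩,
    admissible_cons_of_disjoint hC hv hb hbT hbadm, ?_⟩
  · rw [List.toFinset_cons, List.toFinset_cons, Finset.insert_sdiff_insert,
      Finset.sdiff_insert_of_notMem (notMem_of_mem_link ha), hxdiff]
  rintro (_ | ⟨u, M'⟩) hperm hadm'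
  · exact absurd hperm.length_eq (by simp)
  rcases eq_or_ne u v with rfl | hu
  · have hperm' := hperm.cons_inv
    have hM' : a ≠ M' := fun h => hne ((congrArg _ h).trans (List.toFinset_eq_of_perm _ _ hperm'))
    rw [stepIndex_cons_cons hM', stepIndex_cons_cons fun h => hne (congrArg _ h)]
    exact Nat.succ_le_succ (hbmax M' hperm' hadm'.2)
  · rw [stepIndex_cons_cons_of_ne hu.symm]
    exact Nat.zero_le _

lemma IsMonoConsStep.cons (hC : 1 < C.sup Finset.card) (hv : v ∉ S) {a b : List V}
    (ha : a.toFinset ∈ link C v) (hb : b.toFinset ∈ link C v)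
    (hbT : Disjoint b.toFinset (targetSet C v S))
    (hab : IsMonoConsStep (link C v) (targetSet C v S) a b) :
    IsMonoConsStep C S (v :: a) (v :: b) := by
  obtain ⟨hadj, hlex, hcons⟩ := hab
  refine ⟨?_, List.Lex.cons hlex, hcons.cons hC hv ha hb hbT⟩
  rw [List.toFinset_cons, List.toFinset_cons]
  exact hadj.insert (notMem_of_mem_link ha) (notMem_of_mem_link hb)

/-- Prepending `v` to facets of the link that avoid its target set keeps the first entry of
every vector of distances equal to the distance from `v` to `S`. -/
lemma MonoConsPath.map_cons (hC : 1 < C.sup Finset.card) (hv : v ∉ S) {Γ : List (List V)}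
    (h : MonoConsPath (link C v) (targetSet C v S) Γ)
    (hΓ : ∀ L ∈ Γ, Disjoint L.toFinset (targetSet C v S)) :
    MonoConsPath C S (Γ.map (v :: ·)) := by
  obtain ⟨hfac, hhead, hchain⟩ := monoConsPath_iff.mp h
  refine monoConsPath_iff.mpr ⟨?_, ?_, ?_⟩
  · simp only [List.mem_map]
    rintro _ ⟨L, hL, rfl⟩
    exact (hfac L hL).cons
  · simp only [List.head?_map, Option.mem_def, Option.map_eq_some_iff]
    rintro _ ⟨L, hL, rfl⟩
    have hLΓ := List.mem_of_mem_head? hL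
    exact admissible_cons_of_disjoint hC hv (hfac L hLΓ).2 (hΓ L hLΓ) (hhead L hL)
  · exact (List.isChain_map _).mpr (List.IsChain.imp_of_mem_imp
      (fun a b ha hb hab => hab.cons hC hv (hfac a ha).2 (hfac b hb).2 (hΓ b hb)) hchain)

end Paths

section Segments

variable {S : Finset V} {v : V}

/-- The invariant of the recursion. That the facets before `M` avoid `S` is what allows a path
found in a link to be lifted to `C`. -/
structure IsPathToTarget (C : Finset (Finset V)) (S : Finset V) (L₀ : List V)
    (A : List (List V)) (M : List V) : Prop where
  monoCons : MonoConsPath C S (A ++ [M])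
  head : (A ++ [M]).head? = some L₀
  disjoint : ∀ L ∈ A, Disjoint L.toFinset S
  meets : (M.toFinset ∩ S).Nonempty

lemma IsPathToTarget.nil {L : List V} (hL : IsOrderedFacet C L) (hadm : Admissible C L S)
    (hmeets : (L.toFinset ∩ S).Nonempty) : IsPathToTarget C S L [] L :=
  ⟨monoConsPath_iff.mpr ⟨by simpa using hL, by simpa using hadm, List.isChain_singleton _⟩,
    rfl, by simp, hmeets⟩

lemma IsPathToTarget.isOrderedFacet_last {L₀ M : List V} {A : List (List V)}
    (h : IsPathToTarget C S L₀ A M) : IsOrderedFacet C M :=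
  (monoConsPath_iff.mp h.monoCons).1 M (by simp)

lemma IsMonoConsStep.cons_of_meets (hC : 1 < C.sup Finset.card) (hv : v ∉ S)
    (hfin : vdistSets C {v} S ≠ ⊤) {a b M : List V} (ha : a.toFinset ∈ link C v)
    (hb : b.toFinset ∈ link C v) (hbT : (b.toFinset ∩ targetSet C v S).Nonempty)
    (hab : IsMonoConsStep (link C v) (targetSet C v S) a b)
    (hM : M.toFinset = insert v b.toFinset) (hMadm : Admissible C M S)
    (hMmax : ∀ M', M'.Perm M → Admissible C M' S → stepIndex (v :: a) M' ≤ stepIndex (v :: a) M) :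
    IsMonoConsStep C S (v :: a) M := by
  obtain ⟨hadj, -, ⟨x, hxlast, hxdiff⟩, -⟩ := hab
  have hva := notMem_of_mem_link ha
  refine ⟨?_, ?_, ⟨x, by simp [List.getLast?_cons, hxlast], ?_⟩, hMadm, hMmax⟩
  · rw [List.toFinset_cons, hM]
    exact hadj.insert hva (notMem_of_mem_link hb)
  · obtain ⟨u, M', rfl⟩ := List.exists_cons_of_ne_nil (l := M) fun hnil =>
      Finset.insert_ne_empty v _ (hM.symm.trans (hnil ▸ List.toFinset_nil))
    refine List.Lex.rel (hMadm.1.trans_lt ?_)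
    rw [hM]
    exact vdistSets_insert_lt hC hv hfin hbT
  · rw [List.toFinset_cons, hM, Finset.insert_sdiff_insert, Finset.sdiff_insert_of_notMem hva,
      hxdiff]

lemma IsPathToTarget.lift (hC : 1 < C.sup Finset.card) (hv : v ∉ S)
    (hfin : vdistSets C {v} S ≠ ⊤) {rest Mk Lk M : List V} {A A₂ : List (List V)}
    (h₁ : IsPathToTarget (link C v) (targetSet C v S) rest A Mk) (hA : A ≠ [])
    (hLk : Lk.toFinset = insert v Mk.toFinset) (hLkadm : Admissible C Lk S)
    (hLkmax : ∀ M', M'.Perm Lk → Admissible C M' S →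
      stepIndex (v :: A.getLast hA) M' ≤ stepIndex (v :: A.getLast hA) Lk)
    (h₂ : IsPathToTarget C S Lk A₂ M) :
    IsPathToTarget C S (v :: rest) (A.map (v :: ·) ++ A₂) M := by
  obtain ⟨hpath, hhead, hdisj, hmeets⟩ := h₁
  obtain ⟨hfac, -, hchain⟩ := monoConsPath_iff.mp hpath
  have hlast : A.getLast? = some (A.getLast hA) := List.getLast?_eq_some_getLast hA
  have hjunction : IsMonoConsStep (link C v) (targetSet C v S) (A.getLast hA) Mk :=
    (List.isChain_append.mp hchain).2.2 _ hlast _ rfl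
  have hmem : ∀ L ∈ A, L.toFinset ∈ link C v := fun L hL => (hfac L (by simp [hL])).2
  refine ⟨?_, ?_, ?_, h₂.meets⟩
  · rw [List.append_assoc]
    refine (hpath.of_append_left.map_cons hC hv hdisj).append h₂.monoCons ?_
    simp only [List.getLast?_map, hlast, h₂.head, Option.map_some, Option.mem_some_iff]
    rintro _ rfl _ rfl
    exact hjunction.cons_of_meets hC hv hfin (hmem _ (List.getLast_mem hA))
      (hfac Mk (by simp)).2 hmeets hLk hLkadm hLkmax
  · rw [List.append_assoc, List.head?_append_of_ne_nil _ (by simpa using hA), List.head?_map,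
      ← List.head?_append_of_ne_nil _ hA, hhead]
    rfl
  · simp only [List.mem_append, List.mem_map]
    rintro _ (⟨L, hL, rfl⟩ | hL)
    · rw [List.toFinset_cons]
      exact disjoint_insert_of_disjoint_targetSet hC hv (hmem L hL) (hdisj L hL)
    · exact h₂.disjoint _ hL

/-- The recursion terminates because the distance from the current facet to `S` is finite by
normality and decreases strictly. -/
theorem exists_isPathToTarget_of_link {d : ℕ} (hpure : Pure C d) (hd : 2 ≤ d)
    (hnormal : Normal C) (hS : S.Nonempty) (hSv : S ⊆ verts C)
    (hlink : ∀ (v : V) (T : Finset V), T.Nonempty → T ⊆ verts (link C v) → ∀ L : List V,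
      IsOrderedFacet (link C v) L → Admissible (link C v) L T →
        ∃ A M, IsPathToTarget (link C v) T L A M)
    {L₀ : List V} (hL₀ : IsOrderedFacet C L₀) (hadm : Admissible C L₀ S) :
    ∃ A M, IsPathToTarget C S L₀ A M := by
  have hcard : ∀ F ∈ C, 2 ≤ F.card := fun F hF => hpure F hF ▸ hd
  have hC : 1 < C.sup Finset.card := Nat.lt_of_lt_of_le (hcard _ hL₀.2) (Finset.le_sup hL₀.2)
  generalize hdist : vdistSets C L₀.toFinset S = dist
  induction dist using WellFoundedLT.induction generalizing L₀ with
  | _ dist ih =>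
  by_cases hmeets : (L₀.toFinset ∩ S).Nonempty
  · exact ⟨[], L₀, .nil hL₀ hadm hmeets⟩
  obtain ⟨v, rest, rfl⟩ := List.exists_cons_of_ne_nil (l := L₀) (by
    rintro rfl
    simpa using hcard _ hL₀.2)
  have hv : v ∉ S := fun hvS => hmeets ⟨v, by simp [hvS]⟩
  have hfin : vdistSets C {v} S ≠ ⊤ := vdistSets_singleton_ne_top hC hnormal hcard
    (mem_verts.mpr ⟨_, hL₀.2, by simp⟩) hS hSv
  obtain ⟨A, Mk, h₁⟩ := hlink v _ (targetSet_nonempty hC hv hfin) (targetSet_subset v S) rest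
    hL₀.of_cons hadm.2
  have hMk := h₁.isOrderedFacet_last
  have hA : A ≠ [] := by
    rintro rfl
    obtain rfl : Mk = rest := by simpa using h₁.head
    have := vdistSets_insert_lt hC hv hfin h₁.meets
    rw [← List.toFinset_cons, ← hadm.1] at this
    exact this.false
  obtain ⟨Lk, hLkn, hLk, hLkadm, hLkmax⟩ :=
    exists_admissible_max_stepIndex (insert_mem_of_mem_link hMk.2) S (v :: A.getLast hA)
  have hdec : vdistSets C Lk.toFinset S < dist := by
    rw [hLk]
    exact (vdistSets_insert_lt hC hv hfin h₁.meets).trans_eq (hadm.1.trans hdist)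
  obtain ⟨A₂, M, h₂⟩ := ih _ hdec ⟨hLkn, hLk ▸ insert_mem_of_mem_link hMk.2⟩ hLkadm rfl
  exact ⟨_, _, h₁.lift hC hv hfin hA hLk hLkadm hLkmax h₂⟩

theorem exists_isPathToTarget_of_pure_one (hpure : Pure C 1) (hS : S.Nonempty)
    (hSv : S ⊆ verts C) {L₀ : List V} (hL₀ : IsOrderedFacet C L₀) :
    ∃ A M, IsPathToTarget C S L₀ A M := by
  obtain ⟨x, rfl⟩ : ∃ x, L₀ = [x] := List.length_eq_one_iff.mp (by
    rw [← List.toFinset_card_of_nodup hL₀.1, hpure _ hL₀.2])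
  by_cases hx : x ∈ S
  · exact ⟨[], [x], .nil hL₀ (admissible_singleton x S) ⟨x, by simp [hx]⟩⟩
  obtain ⟨s, hs⟩ := hS
  obtain ⟨F, hF, hsF⟩ := mem_verts.mp (hSv hs)
  obtain ⟨s', rfl⟩ := Finset.card_eq_one.mp (hpure F hF)
  obtain rfl := Finset.mem_singleton.mp hsF
  have hxs : x ≠ s := fun h => hx (h ▸ hs)
  have hsup : C.sup Finset.card ≤ 1 := Finset.sup_le fun F hF => (hpure F hF).le
  have hdist : ∀ y, vdistSets C {y} S = if y ∈ S then 0 else 1 := fun y => by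
    split_ifs with hy <;>
      simp [vdistSets, hsup, show S.Nonempty from ⟨s, hs⟩, Finset.singleton_inter_of_mem, hy,
        Finset.singleton_inter_of_notMem]
  have hstep : IsMonoConsStep C S [x] [s] := by
    refine ⟨⟨by simpa using hxs, by simp, by simp [hxs]⟩, List.Lex.rel ?_,
      ⟨x, rfl, by simp [hxs]⟩, admissible_singleton s S,
      fun M' hM' _ => by rw [List.perm_singleton.mp hM']⟩
    simp [hdist, hx, hs]
  refine ⟨[[x]], [s], ⟨monoConsPath_iff.mpr ⟨?_, ?_, List.isChain_pair.mpr hstep⟩, rfl, ?_,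
    ⟨s, by simp [hs]⟩⟩⟩
  · simpa using ⟨hL₀, List.nodup_singleton s, hF⟩
  · simpa using admissible_singleton x S
  · simpa using hx

theorem exists_isPathToTarget {d : ℕ} (hpure : Pure C d) (hnormal : Normal C)
    (hS : S.Nonempty) (hSv : S ⊆ verts C) {L₀ : List V} (hL₀ : IsOrderedFacet C L₀)
    (hadm : Admissible C L₀ S) : ∃ A M, IsPathToTarget C S L₀ A M := by
  induction d generalizing C S L₀ with
  | zero =>
    obtain ⟨s, hs⟩ := hS
    obtain ⟨F, hF, hsF⟩ := mem_verts.mp (hSv hs)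
    simp [Finset.card_eq_zero.mp (hpure F hF)] at hsF
  | succ d ih =>
    rcases Nat.eq_zero_or_pos d with rfl | hd
    · exact exists_isPathToTarget_of_pure_one hpure hS hSv hL₀
    · exact exists_isPathToTarget_of_link hpure (by omega) hnormal hS hSv
        (fun v _ hT hTv _ hL hLa => ih (hpure.link v) (hnormal.link v) hT hTv hL hLa) hL₀ hadm

end Segments

end MCP

open MCP in
theorem statement1_general {V : Type} [DecidableEq V] (d : ℕ)
    (C : Finset (Finset V)) (hpure : Pure C d) (hnormal : Normal C)
    (S : Finset V) (hS : S.Nonempty) (hSv : S ⊆ verts C)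
    (F₀ : List V) (hF₀ : IsOrderedFacet C F₀) (hadm : Admissible C F₀ S) :
    ∃ Γ : List (List V), MonoConsPath C S Γ ∧ Γ.head? = some F₀ ∧
      ∃ L, Γ.getLast? = some L ∧ (L.toFinset ∩ S).Nonempty := by
  obtain ⟨A, M, h⟩ := exists_isPathToTarget hpure hnormal hS hSv hF₀ hadm
  exact ⟨A ++ [M], h.monoCons, h.head, M, List.getLast?_concat, h.meets⟩

open MCP in
/-- in a pure normal complex, from any admissibly ordered facet there
is a monotone conservative path towards the nonempty target set `S` ending in a facet
that meets `S`. -/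
theorem statement1 {V : Type} [DecidableEq V] [Fintype V] (d : ℕ)
    (C : Finset (Finset V)) (hpure : Pure C d) (hnormal : Normal C)
    (S : Finset V) (hS : S.Nonempty) (hSv : S ⊆ verts C)
    (F₀ : List V) (hF₀ : IsOrderedFacet C F₀) (hadm : Admissible C F₀ S) :
    ∃ Γ : List (List V), MonoConsPath C S Γ ∧ Γ.head? = some F₀ ∧
      ∃ L, Γ.getLast? = some L ∧ (L.toFinset ∩ S).Nonempty :=
  statement1_general d C hpure hnormal S hS hSv F₀ hF₀ hadm
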